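/- arXiv:1603.03881 — 4 statements merged into one kernel-verified Lean document; each statement's English description precedes it below -/
import Mathlib

section
/- For every positive integer n, the alternating sum over all integers k of (-1)^k * C(2n, n+3k) equals 2·3^(n-1); for n = 0 the sum equals 1. -/
/-- Binomial coefficient with integer arguments, zero unless `0 ≤ r ≤ N`. -/
def ichoose (N r : ℤ) : ℕ := if 0 ≤ r ∧ r ≤ N then N.toNat.choose r.toNat else 0

namespace StmtAux

lemma eps_succ (k : ℤ) : ((-1:ℤ)) ^ (k+1).natAbs = -((-1:ℤ)) ^ k.natAbs := by
  rcases Int.even_or_odd k with h | h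
  · have h1 : Even k.natAbs := Int.natAbs_even.mpr h
    have h2 : Odd (k+1).natAbs := Int.natAbs_odd.mpr (Even.add_one h)
    rw [h1.neg_one_pow, h2.neg_one_pow]
  · have h1 : Odd k.natAbs := Int.natAbs_odd.mpr h
    have h2 : Even (k+1).natAbs := Int.natAbs_even.mpr (Odd.add_one h)
    rw [h1.neg_one_pow, h2.neg_one_pow]; ring

lemma ichoose_symm (n : ℕ) (j : ℤ) : ichoose (2*n) (n + j) = ichoose (2*n) (n - j) := by
  unfold ichoose
  by_cases h : 0 ≤ (n:ℤ) + j ∧ (n:ℤ) + j ≤ 2*(n:ℤ)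
  · have h' : 0 ≤ (n:ℤ) - j ∧ (n:ℤ) - j ≤ 2*n := by omega
    rw [if_pos h, if_pos h']
    have e1 : ((2*(n:ℤ)).toNat) = 2*n := by omega
    rw [e1]
    exact Nat.choose_symm_of_eq_add (by omega)
  · have h' : ¬ (0 ≤ (n:ℤ) - j ∧ (n:ℤ) - j ≤ 2*n) := by omega
    rw [if_neg h, if_neg h']

lemma ichoose_pascal (N : ℕ) (r : ℤ) :
    ichoose (N+1) r = ichoose N (r-1) + ichoose N r := by
  unfold ichoose
  by_cases h0 : 0 ≤ r
  · by_cases h1 : r ≤ N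
    · by_cases h2 : 0 ≤ r - 1
      · rw [if_pos ⟨h0, by omega⟩, if_pos ⟨h2, by omega⟩, if_pos ⟨h0, h1⟩]
        have e1 : ((N:ℤ)+1).toNat = N+1 := by omega
        have e2 : r.toNat = (r-1).toNat + 1 := by omega
        have e3 : ((N:ℤ)).toNat = N := by omega
        rw [e1, e2, e3, Nat.choose_succ_succ']
      · have : r = 0 := by omega
        subst this
        norm_num
        omega
    · by_cases h2 : r ≤ (N:ℤ)+1
      · have hr : r = (N:ℤ)+1 := by omega
        subst hr
        rw [if_pos ⟨h0, le_refl _⟩, if_pos ⟨by omega, by omega⟩, if_neg (by omega)]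
        have e1 : ((N:ℤ)+1).toNat = N+1 := by omega
        have e2 : ((N:ℤ)+1-1).toNat = N := by omega
        have e3 : ((N:ℤ)).toNat = N := by omega
        rw [e1, e2, e3]
        simp
      · rw [if_neg (by omega), if_neg (by omega), if_neg (by omega)]
  · rw [if_neg (by omega), if_neg (by omega), if_neg (by omega)]

lemma ichoose_pascal' (N : ℤ) (hN : 0 ≤ N) (r : ℤ) :
    ichoose (N+1) r = ichoose N (r-1) + ichoose N r := by
  obtain ⟨m, rfl⟩ := Int.eq_ofNat_of_zero_le hN
  exact ichoose_pascal m r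

/-- The summand. -/
def F (n : ℕ) (r : ℤ) (k : ℤ) : ℤ := (-1)^k.natAbs * (ichoose (2*n) (n + 3*k + r) : ℤ)

/-- The sum. -/
noncomputable def S (n : ℕ) (r : ℤ) : ℤ := ∑ᶠ k, F n r k

lemma F_ne_zero {n : ℕ} {r k : ℤ} (h : F n r k ≠ 0) :
    0 ≤ (n:ℤ) + 3*k + r ∧ (n:ℤ) + 3*k + r ≤ 2*n := by
  by_contra hc
  apply h
  simp only [F, ichoose, if_neg hc]
  simp

lemma supp_finite (n : ℕ) (r : ℤ) :
    (Function.support (F n r)).Finite := by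
  apply Set.Finite.subset (Set.finite_Icc (-(n:ℤ)-r.natAbs-1) ((n:ℤ)+r.natAbs+1))
  intro k hk
  have h1 := F_ne_zero hk
  simp only [Set.mem_Icc]
  omega

lemma shift (n : ℕ) (r : ℤ) : S n (r+3) = - S n r := by
  have h1 : ∀ k : ℤ, F n (r+3) k = -(F n r (k+1)) := by
    intro k
    unfold F
    rw [eps_succ]
    have e : (n:ℤ) + 3*(k+1) + r = n + 3*k + (r+3) := by ring
    rw [e]
    ring
  calc S n (r+3) = ∑ᶠ k, -(F n r (k+1)) := finsum_congr h1
    _ = -∑ᶠ k, F n r (k+1) := finsum_neg_distrib _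
    _ = -∑ᶠ k, F n r k := congrArg Neg.neg (finsum_comp_equiv (Equiv.addRight (1:ℤ)))
    _ = - S n r := rfl

lemma symm_S (n : ℕ) (r : ℤ) : S n (-r) = S n r := by
  have h1 : ∀ k : ℤ, F n (-r) k = F n r (-k) := by
    intro k
    unfold F
    rw [Int.natAbs_neg]
    have e : (n:ℤ) + 3*(-k) + r = n + (r - 3*k) := by ring
    rw [e, ichoose_symm]
    have e2 : (n:ℤ) - (r - 3*k) = n + 3*k + -r := by ring
    rw [e2]
  calc S n (-r) = ∑ᶠ k, F n r (-k) := finsum_congr h1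
    _ = ∑ᶠ k, F n r k := finsum_comp_equiv (Equiv.neg ℤ)
    _ = S n r := rfl

lemma step (n : ℕ) (r : ℤ) :
    S (n+1) r = S n (r-1) + (S n r + S n r) + S n (r+1) := by
  have h1 : ∀ k : ℤ, F (n+1) r k = F n (r-1) k + (F n r k + F n r k) + F n (r+1) k := by
    intro k
    unfold F
    push_cast
    have a1 : 2*((n:ℤ)+1) = (2*(n:ℤ)+1)+1 := by ring
    have a2 : (n:ℤ)+1+3*k+r = ((n:ℤ)+3*k+r)+1 := by ring
    rw [a1, a2, ichoose_pascal' (2*(n:ℤ)+1) (by positivity) _]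
    have a3 : ((n:ℤ)+3*k+r)+1-1 = (n:ℤ)+3*k+r := by ring
    rw [a3, ichoose_pascal' (2*(n:ℤ)) (by positivity) ((n:ℤ)+3*k+r),
      ichoose_pascal' (2*(n:ℤ)) (by positivity) (((n:ℤ)+3*k+r)+1)]
    have b1 : (n:ℤ)+3*k+(r-1) = ((n:ℤ)+3*k+r)-1 := by ring
    have b2 : (n:ℤ)+3*k+(r+1) = ((n:ℤ)+3*k+r)+1 := by ring
    have b3 : ((n:ℤ)+3*k+r)+1-1 = (n:ℤ)+3*k+r := by ring
    rw [b1, b2, b3]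
    push_cast
    ring
  calc S (n+1) r = ∑ᶠ k, (F n (r-1) k + (F n r k + F n r k) + F n (r+1) k) := finsum_congr h1
    _ = S n (r-1) + (S n r + S n r) + S n (r+1) := by
        have fin1 := supp_finite n (r-1)
        have fin2 := supp_finite n r
        have fin3 := supp_finite n (r+1)
        have fin22 : (Function.support (fun k => F n r k + F n r k)).Finite := by
          apply fin2.subset
          intro k hk
          simp only [Function.mem_support, ne_eq] at hk ⊢
          intro h
          apply hk
          rw [h]; ring
        have fin12 : (Function.support
            (fun k => F n (r-1) k + (F n r k + F n r k))).Finite := by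
          apply (fin1.union fin22).subset
          intro k hk
          simp only [Function.mem_support, ne_eq, Set.mem_union] at hk ⊢
          by_contra hc
          push_neg at hc
          rw [hc.1, hc.2] at hk
          simp at hk
        rw [finsum_add_distrib fin12 fin3, finsum_add_distrib fin1 fin22,
          finsum_add_distrib fin2 fin2]
        rfl

lemma S_zero_zero : S 0 0 = 1 := by
  have h : ∀ x : ℤ, x ≠ 0 → F 0 0 x = 0 := by
    intro x hx
    by_contra h
    have := F_ne_zero h
    simp at this
    omega
  rw [S, finsum_eq_single (F 0 0) 0 h]
  simp [F, ichoose]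

lemma S_zero_one : S 0 1 = 0 := by
  apply finsum_eq_zero_of_forall_eq_zero
  intro k
  by_contra h
  have := F_ne_zero h
  simp at this
  omega

lemma S_rec0 (n : ℕ) : S (n+1) 0 = 2 * S n 0 + 2 * S n 1 := by
  have h := step n 0
  have h1 : S n (0-1) = S n 1 := by
    have := symm_S n 1
    norm_num at this ⊢
    exact this
  rw [h1] at h
  norm_num at h
  linarith

lemma S_rec1 (n : ℕ) : S (n+1) 1 = S n 0 + S n 1 := by
  have h := step n 1
  have h2 : S n 2 = - S n 1 := by
    have hs := shift n (-1)
    have hsym := symm_S n 1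
    norm_num at hs
    rw [hs, hsym]
  norm_num at h
  rw [h2] at h
  linarith

lemma main_lemma : ∀ n : ℕ, S (n+1) 0 = 2 * 3 ^ n ∧ S (n+1) 1 = 3 ^ n := by
  intro n
  induction n with
  | zero =>
    rw [S_rec0, S_rec1, S_zero_zero, S_zero_one]
    norm_num
  | succ m ih =>
    constructor
    · rw [S_rec0, ih.1, ih.2]; ring
    · rw [S_rec1, ih.1, ih.2]; ring

end StmtAux

theorem stmt2 (n : ℕ) :
    ∑ᶠ k : ℤ, ((-1 : ℤ) ^ k.natAbs * (ichoose (2 * n) (n + 3 * k) : ℤ)) =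
      if n = 0 then 1 else 2 * 3 ^ (n - 1) := by
  have key : ∑ᶠ k : ℤ, ((-1 : ℤ) ^ k.natAbs * (ichoose (2 * n) (n + 3 * k) : ℤ)) =
      StmtAux.S n 0 := by
    apply finsum_congr
    intro k
    simp [StmtAux.F]
  rw [key]
  cases n with
  | zero => rw [if_pos rfl, StmtAux.S_zero_zero]
  | succ m =>
    rw [if_neg (Nat.succ_ne_zero m), (StmtAux.main_lemma m).1]
    simp
end

section
/- For every nonnegative integer n, the alternating sum over all integers k of (-1)^k * q^(2k²) * [2n choose n+2k]_q equals the q-Pochhammer product (-q; q²)_n = ∏_{i=0}^{n-1} (1 + q^(2i+1)), as polynomials in q. -/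
/-!
Put `W(N, a, b) = ∑_k (-1)^k q^(2k² + bk) [N, a + 2k]_q`, so that the left-hand side is
`W(2n, n, 0)`. Both q-Pascal rules, the symmetry `[N, N - j] = [N, j]` and the shift `k ↦ k + 1`
turn into linear relations between such sums. The involution `k ↦ -1 - k` shows that
`W(2n, n + 1, 2) = 0`, and after that the relations give
`W(2n + 2, n + 1, 0) = (1 + q^(2n+1)) W(2n, n, 0)`.
-/

open Polynomial

/-- The Gaussian (q-)binomial coefficient as a polynomial in `q = X`, via the
q-Pascal recurrence `[n+1, k+1] = [n, k] + q^(k+1) [n, k+1]`. -/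
noncomputable def gbinom : ℕ → ℕ → Polynomial ℤ
  | _, 0 => 1
  | 0, _ + 1 => 0
  | n + 1, k + 1 => gbinom n k + Polynomial.X ^ (k + 1) * gbinom n (k + 1)

/-- Gaussian binomial with integer lower index, zero for negative lower index. -/
noncomputable def gbinomZ (N : ℕ) (r : ℤ) : Polynomial ℤ := if 0 ≤ r then gbinom N r.toNat else 0

open LaurentPolynomial Function

lemma gbinom_zero_right (n : ℕ) : gbinom n 0 = 1 := by
  cases n <;> rfl

lemma gbinom_succ_succ (n k : ℕ) :
    gbinom (n + 1) (k + 1) = gbinom n k + X ^ (k + 1) * gbinom n (k + 1) := rfl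

lemma gbinomZ_natCast (N m : ℕ) : gbinomZ N m = gbinom N m := by
  simp [gbinomZ]

lemma gbinomZ_of_neg {N : ℕ} {r : ℤ} (hr : r < 0) : gbinomZ N r = 0 := by
  simp [gbinomZ, hr.not_ge]

/-- In `ℤ[T;T⁻¹]` every power `q ^ j`, `j : ℤ`, exists, so the q-Pascal rules and the
symmetry hold for all integer indices, without truncated exponents. -/
noncomputable def gbinomLaurent (N : ℕ) (j : ℤ) : ℤ[T;T⁻¹] := toLaurent (gbinomZ N j)

lemma gbinomLaurent_of_neg {N : ℕ} {j : ℤ} (hj : j < 0) : gbinomLaurent N j = 0 := by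
  rw [gbinomLaurent, gbinomZ_of_neg hj, map_zero]

lemma gbinomLaurent_zero_left (j : ℤ) : gbinomLaurent 0 j = if j = 0 then 1 else 0 := by
  rcases lt_or_ge j 0 with hj | hj
  · rw [gbinomLaurent_of_neg hj, if_neg hj.ne]
  obtain ⟨m, rfl⟩ := Int.eq_ofNat_of_zero_le hj
  rw [gbinomLaurent, gbinomZ_natCast]
  cases m with
  | zero => simp [gbinom_zero_right]
  | succ m => rw [if_neg (by omega)]; exact map_zero toLaurent

lemma gbinomLaurent_succ (N : ℕ) (j : ℤ) :
    gbinomLaurent (N + 1) j = gbinomLaurent N (j - 1) + T j * gbinomLaurent N j := by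
  rcases lt_or_ge j 0 with hj | hj
  · simp [gbinomLaurent_of_neg, hj, show j - 1 < 0 by omega]
  obtain ⟨m, rfl⟩ := Int.eq_ofNat_of_zero_le hj
  cases m with
  | zero =>
    rw [Nat.cast_zero, zero_sub, gbinomLaurent_of_neg (j := -1) (by norm_num), T_zero, one_mul,
      zero_add]
    simp only [gbinomLaurent, ← Nat.cast_zero (R := ℤ), gbinomZ_natCast, gbinom_zero_right]
  | succ m =>
    rw [Nat.cast_succ, add_sub_cancel_right, gbinomLaurent, gbinomLaurent, gbinomLaurent,
      ← Nat.cast_succ, gbinomZ_natCast, gbinomZ_natCast, gbinomZ_natCast, gbinom_succ_succ,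
      map_add, map_mul, toLaurent_X_pow]

lemma gbinomLaurent_of_lt {N : ℕ} {j : ℤ} (hj : N < j) : gbinomLaurent N j = 0 := by
  induction N generalizing j with
  | zero => rw [gbinomLaurent_zero_left, if_neg (by omega)]
  | succ N ih => rw [gbinomLaurent_succ, ih (by omega), ih (by omega), mul_zero, add_zero]

lemma one_sub_T_mul_gbinomLaurent (N : ℕ) (j : ℤ) :
    (1 - T j) * gbinomLaurent N j = (1 - T (N + 1 - j)) * gbinomLaurent N (j - 1) := by
  induction N generalizing j with
  | zero =>
    simp only [gbinomLaurent_zero_left]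
    by_cases h0 : j = 0
    · simp [h0, T_zero]
    by_cases h1 : j = 1
    · simp [h1, T_zero]
    simp [h0, sub_eq_zero, h1]
  | succ N ih =>
    have e1 : (T j : ℤ[T;T⁻¹]) * T (N + 1 - j) = T (N + 1) := by
      rw [← T_add]; congr 1; ring
    have e2 : (T (j - 1) : ℤ[T;T⁻¹]) * T (N + 1 - (j - 1)) = T (N + 1) := by
      rw [← T_add]; congr 1; ring
    rw [gbinomLaurent_succ, gbinomLaurent_succ]
    push_cast
    rw [show (N : ℤ) + 1 + 1 - j = N + 1 - (j - 1) by ring]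
    linear_combination T j * ih j + ih (j - 1) - gbinomLaurent N (j - 1) * (e1 - e2)

lemma gbinomLaurent_succ' (N : ℕ) (j : ℤ) :
    gbinomLaurent (N + 1) j = T (N + 1 - j) * gbinomLaurent N (j - 1) + gbinomLaurent N j := by
  rw [gbinomLaurent_succ]
  linear_combination -one_sub_T_mul_gbinomLaurent N j

lemma gbinomLaurent_symm (N : ℕ) (j : ℤ) : gbinomLaurent N (N - j) = gbinomLaurent N j := by
  induction N generalizing j with
  | zero =>
    simp only [gbinomLaurent_zero_left, Nat.cast_zero, zero_sub, neg_eq_zero]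
  | succ N ih =>
    have h1 : gbinomLaurent N (↑(N + 1) - j - 1) = gbinomLaurent N j := by
      rw [← ih j]; congr 1; push_cast; ring
    have h2 : gbinomLaurent N (↑(N + 1) - j) = gbinomLaurent N (j - 1) := by
      rw [← ih (j - 1)]; congr 1; push_cast; ring
    rw [gbinomLaurent_succ, gbinomLaurent_succ', h1, h2, Nat.cast_succ, add_comm]

lemma hasFiniteSupport_mul_gbinomLaurent (c : ℤ → ℤ[T;T⁻¹]) (N : ℕ) (a : ℤ) :
    HasFiniteSupport fun k => c k * gbinomLaurent N (a + 2 * k) := by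
  refine ((Set.finite_Icc (0 : ℤ) N).preimage (f := fun k => a + 2 * k) ?_).subset ?_
  · intro k _ l _ h
    simp only at h
    omega
  · intro k hk
    by_contra hout
    simp only [Set.mem_preimage, Set.mem_Icc, not_and_or, not_le] at hout
    rcases hout with h | h
    · exact hk (by simp only [gbinomLaurent_of_neg h, mul_zero])
    · exact hk (by simp only [gbinomLaurent_of_lt h, mul_zero])

noncomputable def altGbinomTerm (N : ℕ) (a b k : ℤ) : ℤ[T;T⁻¹] :=
  (k.negOnePow : ℤ[T;T⁻¹]) * T (2 * k ^ 2 + b * k) * gbinomLaurent N (a + 2 * k)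

noncomputable def altGbinomSum (N : ℕ) (a b : ℤ) : ℤ[T;T⁻¹] :=
  ∑ᶠ k : ℤ, altGbinomTerm N a b k

lemma hasFiniteSupport_altGbinomTerm (N : ℕ) (a b : ℤ) :
    HasFiniteSupport (altGbinomTerm N a b) :=
  hasFiniteSupport_mul_gbinomLaurent _ N a

lemma altGbinomTerm_succ (N : ℕ) (a b k : ℤ) :
    altGbinomTerm (N + 1) a b k =
      altGbinomTerm N (a - 1) b k + T a * altGbinomTerm N a (b + 2) k := by
  have e : (T (2 * k ^ 2 + b * k) : ℤ[T;T⁻¹]) * T (a + 2 * k) =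
      T a * T (2 * k ^ 2 + (b + 2) * k) := by
    rw [← T_add, ← T_add]; congr 1; ring
  rw [altGbinomTerm, altGbinomTerm, altGbinomTerm, gbinomLaurent_succ,
    show a + 2 * k - 1 = a - 1 + 2 * k by ring]
  linear_combination (k.negOnePow : ℤ[T;T⁻¹]) * gbinomLaurent N (a + 2 * k) * e

lemma altGbinomTerm_succ' (N : ℕ) (a b k : ℤ) :
    altGbinomTerm (N + 1) a b k =
      T (N + 1 - a) * altGbinomTerm N (a - 1) (b - 2) k + altGbinomTerm N a b k := by
  have e : (T (2 * k ^ 2 + b * k) : ℤ[T;T⁻¹]) * T (N + 1 - (a + 2 * k)) =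
      T (N + 1 - a) * T (2 * k ^ 2 + (b - 2) * k) := by
    rw [← T_add, ← T_add]; congr 1; ring
  rw [altGbinomTerm, altGbinomTerm, altGbinomTerm, gbinomLaurent_succ',
    show a + 2 * k - 1 = a - 1 + 2 * k by ring]
  linear_combination (k.negOnePow : ℤ[T;T⁻¹]) * gbinomLaurent N (a - 1 + 2 * k) * e

lemma altGbinomTerm_neg (N : ℕ) (a b k : ℤ) :
    altGbinomTerm N a b (-k) = altGbinomTerm N (N - a) (-b) k := by
  rw [altGbinomTerm, altGbinomTerm, Int.negOnePow_neg, ← gbinomLaurent_symm N (a + 2 * -k)]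
  congr 3 <;> ring

lemma altGbinomTerm_add_one (N : ℕ) (a b k : ℤ) :
    altGbinomTerm N a b (k + 1) = -(T (b + 2) * altGbinomTerm N (a + 2) (b + 4) k) := by
  have e : (T (2 * (k + 1) ^ 2 + b * (k + 1)) : ℤ[T;T⁻¹]) =
      T (b + 2) * T (2 * k ^ 2 + (b + 4) * k) := by
    rw [← T_add]; congr 1; ring
  rw [altGbinomTerm, altGbinomTerm, Int.negOnePow_succ, e,
    show a + 2 * (k + 1) = a + 2 + 2 * k by ring]
  push_cast
  ring

lemma altGbinomSum_succ (N : ℕ) (a b : ℤ) :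
    altGbinomSum (N + 1) a b = altGbinomSum N (a - 1) b + T a * altGbinomSum N a (b + 2) := by
  have hfin : HasFiniteSupport fun k => T a * altGbinomTerm N a (b + 2) k :=
    (hasFiniteSupport_altGbinomTerm N a (b + 2)).mul_right _
  rw [altGbinomSum, finsum_congr (altGbinomTerm_succ N a b),
    finsum_add_distrib (hasFiniteSupport_altGbinomTerm _ _ _) hfin, ← mul_finsum]
  rfl

lemma altGbinomSum_succ' (N : ℕ) (a b : ℤ) :
    altGbinomSum (N + 1) a b =
      T (N + 1 - a) * altGbinomSum N (a - 1) (b - 2) + altGbinomSum N a b := by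
  have hfin : HasFiniteSupport fun k => T (N + 1 - a) * altGbinomTerm N (a - 1) (b - 2) k :=
    (hasFiniteSupport_altGbinomTerm N (a - 1) (b - 2)).mul_right _
  rw [altGbinomSum, finsum_congr (altGbinomTerm_succ' N a b),
    finsum_add_distrib hfin (hasFiniteSupport_altGbinomTerm _ _ _), ← mul_finsum]
  rfl

lemma altGbinomSum_symm (N : ℕ) (a b : ℤ) :
    altGbinomSum N a b = altGbinomSum N (N - a) (-b) := by
  rw [altGbinomSum, altGbinomSum, ← finsum_comp_equiv (Equiv.neg ℤ)]
  exact finsum_congr (altGbinomTerm_neg N a b)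

lemma altGbinomSum_shift (N : ℕ) (a b : ℤ) :
    altGbinomSum N a b = -(T (b + 2) * altGbinomSum N (a + 2) (b + 4)) := by
  rw [altGbinomSum, altGbinomSum, ← finsum_comp_equiv (Equiv.addRight 1), mul_finsum,
    ← finsum_neg_distrib]
  exact finsum_congr (altGbinomTerm_add_one N a b)

/-- The involution `k ↦ -1 - k` reverses the sign of each term. -/
lemma altGbinomSum_two_mul_succ_eq_zero (n : ℕ) : altGbinomSum (2 * n) (n + 1) 2 = 0 := by
  have h : altGbinomSum (2 * n) (n + 1) 2 = -altGbinomSum (2 * n) (n + 1) 2 := by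
    conv_lhs => rw [altGbinomSum_symm, altGbinomSum_shift]
    rw [show (2 * n : ℕ) - ((n : ℤ) + 1) + 2 = n + 1 by push_cast; ring]
    norm_num [T_zero]
  have two_ne : (2 : ℤ[T;T⁻¹]) ≠ 0 := by
    have hX := toLaurent_ne_zero.mpr (two_ne_zero : (2 : ℤ[X]) ≠ 0)
    rwa [map_ofNat] at hX
  have h2 : (2 : ℤ[T;T⁻¹]) * altGbinomSum (2 * n) (n + 1) 2 = 0 := by linear_combination h
  exact (mul_eq_zero.mp h2).resolve_left two_ne

lemma altGbinomSum_zero : altGbinomSum 0 0 0 = 1 := by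
  rw [altGbinomSum, finsum_eq_single _ 0]
  · simp [altGbinomTerm, gbinomLaurent_zero_left, T_zero]
  · intro k hk
    rw [altGbinomTerm, gbinomLaurent_zero_left, if_neg (by omega), mul_zero]

lemma altGbinomSum_two_mul_add_two (n : ℕ) :
    altGbinomSum (2 * n + 1 + 1) (n + 1) 0 =
      (1 + T (2 * n + 1)) * altGbinomSum (2 * n) n 0 := by
  have hP : altGbinomSum (2 * n + 1) n 0 = altGbinomSum (2 * n) n 0 := by
    rw [altGbinomSum_symm, altGbinomSum_succ,
      show ((2 * n + 1 : ℕ) : ℤ) - n - 1 = n by push_cast; ring,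
      show ((2 * n + 1 : ℕ) : ℤ) - n = n + 1 by push_cast; ring,
      neg_zero, zero_add, altGbinomSum_two_mul_succ_eq_zero, mul_zero, add_zero]
  have hQ : altGbinomSum (2 * n + 1) (n + 1) 2 = T n * altGbinomSum (2 * n) n 0 := by
    rw [altGbinomSum_succ', altGbinomSum_two_mul_succ_eq_zero, add_zero,
      show ((2 * n : ℕ) : ℤ) + 1 - (n + 1) = n by push_cast; ring, add_sub_cancel_right, sub_self]
  have hT : (T (n + 1) : ℤ[T;T⁻¹]) * T n = T (2 * n + 1) := by
    rw [← T_add]; congr 1; ring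
  rw [altGbinomSum_succ, add_sub_cancel_right, hP, zero_add, hQ]
  linear_combination altGbinomSum (2 * n) n 0 * hT

lemma altGbinomSum_two_mul_eq_prod (n : ℕ) :
    altGbinomSum (2 * n) n 0 = ∏ i ∈ Finset.range n, (1 + T (2 * i + 1)) := by
  induction n with
  | zero => exact altGbinomSum_zero
  | succ n ih =>
    rw [show 2 * (n + 1) = 2 * n + 1 + 1 by ring, Nat.cast_succ, altGbinomSum_two_mul_add_two,
      ih, Finset.prod_range_succ, mul_comm]

theorem stmt4 (n : ℕ) :
    ∑ᶠ k : ℤ, ((-1 : Polynomial ℤ) ^ k.natAbs * Polynomial.X ^ (2 * k.natAbs ^ 2) *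
        gbinomZ (2 * n) ((n : ℤ) + 2 * k)) =
      ∏ i ∈ Finset.range n, (1 + Polynomial.X ^ (2 * i + 1)) := by
  set f : ℤ → ℤ[X] := fun k => (-1 : Polynomial ℤ) ^ k.natAbs *
    Polynomial.X ^ (2 * k.natAbs ^ 2) * gbinomZ (2 * n) ((n : ℤ) + 2 * k)
  have hf : ∀ k, toLaurent (f k) = altGbinomTerm (2 * n) n 0 k := by
    intro k
    rw [altGbinomTerm, Int.coe_negOnePow, map_mul, map_mul, map_pow, map_neg, map_one,
      toLaurent_X_pow, gbinomLaurent]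
    push_cast
    rw [sq_abs, zero_mul, add_zero]
  have hfin : HasFiniteSupport f := by
    rw [HasFiniteSupport, ← support_comp_eq toLaurent toLaurent_eq_zero]
    simp only [comp_def, hf]
    exact hasFiniteSupport_altGbinomTerm (2 * n) n 0
  apply toLaurent_injective
  rw [map_finsum _ hfin, finsum_congr hf, map_prod]
  simp only [map_add, map_one, toLaurent_X_pow]
  push_cast
  exact altGbinomSum_two_mul_eq_prod n
end

section
/- For all nonnegative integers n (with n ≥ 1) and m, ∑_{k∈ℤ} (−1)^k C(2n+m, n+2k) = 2^n · (∑_{l≥0} C(m, 4l) − ∑_{l≥0} C(m, 4l+2)). -/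
lemma ichoose_of_nonneg (N : ℕ) (r : ℤ) (hr : 0 ≤ r) :
    ichoose N r = N.choose r.toNat := by
  unfold ichoose
  by_cases h : r ≤ (N : ℤ)
  · simp [hr, h]
  · push_neg at h
    rw [if_neg (by omega), eq_comm, Nat.choose_eq_zero_of_lt]
    omega

lemma ichoose_of_neg (N : ℤ) {r : ℤ} (hr : r < 0) : ichoose N r = 0 := by
  unfold ichoose; rw [if_neg (by omega)]

lemma ichoose_pascal (N : ℕ) (r : ℤ) :
    (ichoose (N + 1) r : ℤ) = ichoose N r + ichoose N (r - 1) := by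
  have hcast : ((N:ℤ)+1) = ((N+1 : ℕ) : ℤ) := by push_cast; ring
  rcases lt_or_ge r 0 with h | h
  · rw [ichoose_of_neg _ h, ichoose_of_neg _ h,
      ichoose_of_neg (N:ℤ) (show r - 1 < 0 by omega)]
    simp
  · have h1 : (0:ℤ) ≤ r := h
    rcases eq_or_lt_of_le h with h0 | h0
    · rw [ichoose_of_neg (N:ℤ) (show r - 1 < 0 by omega), hcast,
        ichoose_of_nonneg (N+1) r h1, ichoose_of_nonneg N r h1, ← h0]
      simp
    · have h2 : (0:ℤ) ≤ r - 1 := by omega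
      rw [hcast, ichoose_of_nonneg (N+1) r h1, ichoose_of_nonneg N r h1,
        ichoose_of_nonneg N (r-1) h2]
      have h3 : r.toNat = (r-1).toNat + 1 := by omega
      rw [h3, Nat.choose_succ_succ']
      push_cast; ring

lemma neg_one_pow_natAbs (k : ℤ) :
    ((-1 : ℤ)) ^ k.natAbs = if Even k then 1 else -1 := by
  rcases Int.even_or_odd k with h | h
  · rw [if_pos h, (Int.natAbs_even.mpr h).neg_one_pow]
  · rw [if_neg (Int.not_even_iff_odd.mpr h),
      (Int.natAbs_odd.mpr h).neg_one_pow]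

lemma neg_one_pow_succ (k : ℤ) : ((-1 : ℤ)) ^ (k + 1).natAbs = -(-1) ^ k.natAbs := by
  rw [neg_one_pow_natAbs, neg_one_pow_natAbs]
  by_cases h : Even k <;> simp [h, Int.even_add_one]
noncomputable def U (a : ℤ) (N : ℕ) : ℤ :=
  ∑ᶠ k : ℤ, ((-1 : ℤ) ^ k.natAbs * (ichoose N (a + 2 * k) : ℤ))

lemma U_support (a : ℤ) (N : ℕ) :
    (Function.support fun k : ℤ =>
      ((-1:ℤ)^k.natAbs * (ichoose N (a+2*k) : ℤ))).Finite := by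
  apply Set.Finite.subset (Set.finite_Icc (-(a.natAbs:ℤ) - N) ((a.natAbs:ℤ) + N))
  intro k hk
  simp only [Function.mem_support] at hk
  have h1 : ichoose N (a+2*k) ≠ 0 := by intro h; apply hk; rw [h]; simp
  have h2 : 0 ≤ a + 2*k ∧ a + 2*k ≤ N := by
    by_contra h; exact h1 (by unfold ichoose; rw [if_neg h])
  simp only [Set.mem_Icc]; omega

lemma U_pascal (a : ℤ) (N : ℕ) : U a (N+1) = U a N + U (a-1) N := by
  unfold U
  rw [← finsum_add_distrib (U_support a N) (U_support (a-1) N)]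
  apply finsum_congr
  intro k
  have : ((N+1 : ℕ) : ℤ) = (N:ℤ) + 1 := by push_cast; ring
  rw [this, ichoose_pascal N (a + 2*k)]
  have : a - 1 + 2*k = a + 2*k - 1 := by ring
  rw [this]; ring

lemma U_shift (a : ℤ) (N : ℕ) : U (a-2) N = - U a N := by
  unfold U
  rw [← finsum_comp_equiv (Equiv.addRight (1:ℤ))
    (f := fun k : ℤ => ((-1:ℤ)^k.natAbs * (ichoose N ((a-2) + 2*k) : ℤ))),
    ← finsum_neg_distrib]
  apply finsum_congr
  intro k
  simp only [Equiv.coe_addRight]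
  rw [neg_one_pow_succ]
  have : a - 2 + 2*(k+1) = a + 2*k := by ring
  rw [this]; ring

lemma U_two_step (a : ℤ) (N : ℕ) : U a (N+2) = 2 * U (a-1) N := by
  have h1 : U a (N+2) = U a (N+1) + U (a-1) (N+1) := U_pascal a (N+1)
  have h2 := U_pascal a N
  have h3 := U_pascal (a-1) N
  have h4 : U (a-1-1) N = - U a N := by
    have : a - 1 - 1 = a - 2 := by ring
    rw [this]; exact U_shift a N
  rw [h1, h2, h3, h4]; ring
lemma U_zero_zero : U 0 0 = 1 := by
  unfold U
  rw [finsum_eq_single _ (0:ℤ)]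
  · have : ichoose ((0:ℕ):ℤ) (0 + 2*0) = 1 := by unfold ichoose; norm_num
    rw [this]; simp
  · intro k hk
    have : ichoose ((0:ℕ):ℤ) (0 + 2*k) = 0 := by
      unfold ichoose; rw [if_neg (by push_cast; omega)]
    rw [this]; simp

lemma U_neg_one_zero : U (-1) 0 = 0 := by
  unfold U
  have h : ∀ k : ℤ, ((-1:ℤ)^k.natAbs * (ichoose ((0:ℕ):ℤ) (-1 + 2*k) : ℤ)) = 0 := by
    intro k
    have : ichoose ((0:ℕ):ℤ) (-1 + 2*k) = 0 := by
      unfold ichoose; rw [if_neg (by push_cast; omega)]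
    rw [this]; simp
  rw [finsum_congr h, finsum_zero]

lemma U_main (m : ℕ) : ∀ n : ℕ, U n (2*n+m) = 2^n * U 0 m := by
  intro n
  induction n with
  | zero => simp
  | succ n ih =>
    have h1 : 2*(n+1)+m = (2*n+m)+2 := by ring
    rw [h1, U_two_step]
    have h2 : ((n+1:ℕ):ℤ) - 1 = (n:ℤ) := by push_cast; ring
    rw [h2, ih]; ring

def A (m j : ℕ) : ℤ := ∑ l ∈ Finset.range (m+1), (m.choose (4*l+j) : ℤ)

lemma A_ext (m j : ℕ) :
    ∑ l ∈ Finset.range (m+2), (m.choose (4*l+j) : ℤ) = A m j := by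
  rw [Finset.sum_range_succ]
  have : m.choose (4*(m+1)+j) = 0 := Nat.choose_eq_zero_of_lt (by omega)
  rw [this]; simp [A]

lemma A_succ (m j : ℕ) : A (m+1) (j+1) = A m (j+1) + A m j := by
  have h : ∀ l, ((m+1).choose (4*l+(j+1)) : ℤ)
      = (m.choose (4*l+(j+1)) : ℤ) + (m.choose (4*l+j) : ℤ) := by
    intro l
    have : 4*l+(j+1) = (4*l+j)+1 := by omega
    rw [this, Nat.choose_succ_succ']
    push_cast
    have : 4*l+j+1 = 4*l+(j+1) := by omega
    rw [this]; ring
  unfold A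
  rw [show m+1+1 = m+2 from rfl, Finset.sum_congr rfl (fun l _ => h l),
    Finset.sum_add_distrib, A_ext, A_ext]
  rfl

lemma A_zero_succ (m : ℕ) : A (m+1) 0 = A m 0 + A m 3 := by
  have e1 : A (m+1) 0 = (∑ l ∈ Finset.range (m+1), ((m+1).choose (4*(l+1)+0) : ℤ))
      + ((m+1).choose (4*0+0) : ℤ) := by
    unfold A
    exact Finset.sum_range_succ' (fun l => ((m+1).choose (4*l+0) : ℤ)) (m+1)
  have h : ∀ l, ((m+1).choose (4*(l+1)+0) : ℤ)
      = (m.choose (4*l+3) : ℤ) + (m.choose (4*(l+1)+0) : ℤ) := by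
    intro l
    have h1 : 4*(l+1)+0 = (4*l+3)+1 := by omega
    rw [h1, Nat.choose_succ_succ']
    push_cast
    rw [show 4*l+3+1 = 4*(l+1)+0 from by omega]
  have e3 : (∑ l ∈ Finset.range (m+1), (m.choose (4*(l+1)+0) : ℤ))
      = A m 0 - (m.choose (4*0+0) : ℤ) := by
    rw [Finset.sum_range_succ, Nat.choose_eq_zero_of_lt (show m < 4*(m+1)+0 by omega)]
    unfold A
    rw [Finset.sum_range_succ' (fun l => (m.choose (4*l+0):ℤ)) m]
    push_cast; ring
  rw [e1, Finset.sum_congr rfl (fun l _ => h l), Finset.sum_add_distrib, e3]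
  have c1 : ((m+1).choose (4*0+0) : ℤ) = 1 := by norm_num
  have c2 : ((m).choose (4*0+0) : ℤ) = 1 := by norm_num
  rw [c1, c2]
  unfold A; ring

lemma U_vals : ∀ m : ℕ, U 0 m = A m 0 - A m 2 ∧ U (-1) m = -(A m 1 - A m 3) := by
  intro m
  induction m with
  | zero =>
    constructor
    · rw [U_zero_zero]; simp [A]
    · rw [U_neg_one_zero]; simp [A]
  | succ m ih =>
    obtain ⟨ih1, ih2⟩ := ih
    constructor
    · rw [U_pascal, ih1, show (0:ℤ)-1 = -1 from by ring, ih2,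
        A_zero_succ, show (2:ℕ) = 1+1 from rfl, A_succ]
      ring
    · rw [U_pascal, ih2, show (-1:ℤ)-1 = 0-2 from by ring, U_shift, ih1,
        show (1:ℕ) = 0+1 from rfl, A_succ, show (3:ℕ) = 2+1 from rfl, A_succ]
      ring

theorem stmt18 (n m : ℕ) (hn : 0 < n) :
    ∑ᶠ k : ℤ, ((-1 : ℤ) ^ k.natAbs * (ichoose (2 * n + m) (n + 2 * k) : ℤ)) =
      2 ^ n * ((∑ l ∈ Finset.range (m + 1), (m.choose (4 * l) : ℤ)) -
        ∑ l ∈ Finset.range (m + 1), (m.choose (4 * l + 2) : ℤ)) := by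
  have hL : (∑ᶠ k : ℤ, ((-1 : ℤ) ^ k.natAbs * (ichoose (2 * n + m) (n + 2 * k) : ℤ)))
      = U n (2*n+m) := by
    unfold U
    apply finsum_congr
    intro k
    norm_num [show ((2*n+m : ℕ) : ℤ) = 2*(n:ℤ)+(m:ℤ) from by push_cast; ring]
  rw [hL, U_main, (U_vals m).1]
  have hA0 : A m 0 = ∑ l ∈ Finset.range (m + 1), (m.choose (4 * l) : ℤ) := by
    unfold A; apply Finset.sum_congr rfl; intro l _; norm_num
  rw [hA0]; rfl
end

section
/- For every positive integer n and nonnegative integer m, ∑_{k∈ℤ} (−1)^k C(2n+m, n+3k) = 3^{n−1} · [ (∑_{l≥0} C(m+1, 6l) − ∑_{l≥0} C(m+1, 6l+3)) + (∑_{l≥0} C(m+1, 6l+1) − ∑_{l≥0} C(m+1, 6l+4)) ]. -/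
def w (r j : ℕ) : ℤ :=
  if j % 6 = r % 6 then 1 else if j % 6 = (r + 3) % 6 then -1 else 0

def T (N r : ℕ) : ℤ := ∑ j ∈ Finset.range (N + 1), w r j * (N.choose j : ℤ)

lemma w_succ (r i : ℕ) : w (r + 1) (i + 1) = w r i := by
  unfold w; split_ifs <;> omega

lemma w_period (r j : ℕ) : w (r + 6) j = w r j := by
  unfold w; split_ifs <;> omega

lemma w_anti (r j : ℕ) : w (r + 3) j = - w r j := by
  unfold w; split_ifs <;> omega

lemma T_period (N r : ℕ) : T N (r + 6) = T N r := by
  unfold T; exact Finset.sum_congr rfl fun j _ => by rw [w_period]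

lemma T_anti (N r : ℕ) : T N (r + 3) = - T N r := by
  unfold T
  rw [← Finset.sum_neg_distrib]
  exact Finset.sum_congr rfl fun j _ => by rw [w_anti]; ring

lemma T_pascal (N r : ℕ) : T (N + 1) (r + 1) = T N r + T N (r + 1) := by
  unfold T
  rw [Finset.sum_range_succ' (fun j => w (r+1) j * (((N+1).choose j : ℕ) : ℤ)) (N+1)]
  have h1 : ∀ i ∈ Finset.range (N+1), w (r+1) (i+1) * (((N+1).choose (i+1) : ℕ) : ℤ)
      = w r i * (N.choose i : ℤ) + w (r+1) (i+1) * (N.choose (i+1) : ℤ) := by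
    intro i _
    rw [w_succ, Nat.choose_succ_succ']
    push_cast; ring
  rw [Finset.sum_congr rfl h1, Finset.sum_add_distrib]
  have h2 : (∑ i ∈ Finset.range (N+1), w (r+1) (i+1) * (N.choose (i+1) : ℤ))
      + w (r+1) 0 * (((N+1).choose 0 : ℕ) : ℤ)
      = ∑ j ∈ Finset.range (N+1), w (r+1) j * (N.choose j : ℤ) := by
    have h3 : (((N+1).choose 0 : ℕ) : ℤ) = ((N.choose 0 : ℕ) : ℤ) := by simp
    rw [h3, ← Finset.sum_range_succ' (fun j => w (r+1) j * (N.choose j : ℤ)) (N+1),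
      Finset.sum_range_succ]
    simp [Nat.choose_succ_self]
  linarith [h2]

lemma T_pascal' (N r : ℕ) : T (N + 1) r = T N (r + 5) + T N r := by
  have h1 := T_period (N+1) r
  have h2 := T_pascal N (r + 5)
  have h3 : r + 5 + 1 = r + 6 := by omega
  rw [h3] at h2
  rw [← h1, h2, T_period]

lemma T_key (N r : ℕ) : T (N + 1) (r + 2) + T (N + 1) r = T (N + 1) (r + 1) := by
  have h1 := T_pascal N (r + 1)
  have h11 : r + 1 + 1 = r + 2 := by omega
  rw [h11] at h1
  have h2 := T_pascal' N r
  have h3 : T N (r + 5) = - T N (r + 2) := by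
    have := T_anti N (r + 2)
    have e : r + 2 + 3 = r + 5 := by omega
    rw [e] at this; exact this
  have h4 := T_pascal N r
  linarith

lemma T_step (N r : ℕ) : T (N + 3) (r + 1) = 3 * T (N + 1) r := by
  have h1 := T_pascal (N + 2) r
  have h2 := T_pascal (N + 1) r
  have h3 := T_pascal' (N + 1) r
  have h4 : T (N + 1) (r + 5) = - T (N + 1) (r + 2) := by
    have := T_anti (N + 1) (r + 2)
    have e : r + 2 + 3 = r + 5 := by omega
    rw [e] at this; exact this
  have h5 := T_key N r
  linarith

lemma T_main (n m : ℕ) (hn : 0 < n) :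
    T (2 * n + m) n = 3 ^ (n - 1) * (T (m + 1) 0 + T (m + 1) 1) := by
  induction n with
  | zero => omega
  | succ n ih =>
    rcases Nat.eq_zero_or_pos n with h0 | h0
    · subst h0
      have := T_pascal (m + 1) 0
      have e : 2 * 1 + m = m + 1 + 1 := by omega
      rw [e]
      simpa using this
    · obtain ⟨N, hN⟩ : ∃ N, 2 * n + m = N + 1 := ⟨2 * n + m - 1, by omega⟩
      have e : 2 * (n + 1) + m = N + 3 := by omega
      rw [e, T_step N n, ← hN, ih h0]
      have e2 : n + 1 - 1 = (n - 1) + 1 := by omega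
      rw [e2, pow_succ]
      ring

lemma sum_if_mod (M r : ℕ) (hr : r < 6) :
    ∑ j ∈ Finset.range (M + 1), (if j % 6 = r then (M.choose j : ℤ) else 0)
      = ∑ l ∈ Finset.range (M + 1), (M.choose (6 * l + r) : ℤ) := by
  have hext : ∑ j ∈ Finset.range (M + 1), (if j % 6 = r then (M.choose j : ℤ) else 0)
      = ∑ j ∈ Finset.range (6 * (M + 1)), (if j % 6 = r then (M.choose j : ℤ) else 0) := by
    apply Finset.sum_subset
    · exact Finset.range_subset_range.2 (by omega)
    · intro j hj hj'
      simp only [Finset.mem_range] at hj hj'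
      have : M < j := by omega
      simp [Nat.choose_eq_zero_of_lt this]
  rw [hext, ← Finset.sum_filter]
  refine Finset.sum_nbij' (fun j => j / 6) (fun l => 6 * l + r) ?_ ?_ ?_ ?_ ?_
  · intro a ha
    simp only [Finset.mem_filter, Finset.mem_range] at ha ⊢
    omega
  · intro a ha
    simp only [Finset.mem_filter, Finset.mem_range] at ha ⊢
    omega
  · intro a ha
    simp only [Finset.mem_filter, Finset.mem_range] at ha
    omega
  · intro a ha
    simp only [Finset.mem_range] at ha
    omega
  · intro a ha
    simp only [Finset.mem_filter, Finset.mem_range] at ha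
    have h : 6 * (a / 6) + r = a := by omega
    rw [h]

lemma T_eq (M r : ℕ) (hr : r + 3 < 6) :
    T M r = (∑ l ∈ Finset.range (M + 1), (M.choose (6 * l + r) : ℤ))
          - (∑ l ∈ Finset.range (M + 1), (M.choose (6 * l + (r + 3)) : ℤ)) := by
  rw [← sum_if_mod M r (by omega), ← sum_if_mod M (r + 3) hr, ← Finset.sum_sub_distrib]
  unfold T w
  apply Finset.sum_congr rfl
  intro j _
  have h1 : r % 6 = r := Nat.mod_eq_of_lt (by omega)
  have h2 : (r + 3) % 6 = r + 3 := Nat.mod_eq_of_lt hr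
  rw [h1, h2]
  split_ifs <;> first | (exfalso; omega) | ring

lemma lhs_eq (n m : ℕ) :
    (∑ᶠ k : ℤ, ((-1 : ℤ) ^ k.natAbs * (ichoose (2 * n + m) (n + 3 * k) : ℤ)))
      = T (2 * n + m) n := by
  have hcond : ∀ k : ℤ, ¬(0 ≤ (n : ℤ) + 3 * k ∧ (n : ℤ) + 3 * k ≤ 2 * (n : ℤ) + m) →
      ichoose (2 * (n : ℤ) + m) ((n : ℤ) + 3 * k) = 0 := by
    intro k hc
    unfold ichoose
    rw [if_neg hc]
  have hsupp : (Function.support fun k : ℤ =>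
      ((-1 : ℤ) ^ k.natAbs * (ichoose (2 * (n : ℤ) + m) ((n : ℤ) + 3 * k) : ℤ)))
      ⊆ ↑(Finset.Icc (-(n : ℤ)) ((n : ℤ) + m)) := by
    intro k hk
    simp only [Function.mem_support] at hk
    simp only [Finset.coe_Icc, Set.mem_Icc]
    by_contra hc
    apply hk
    rw [hcond k (by omega)]
    simp
  rw [finsum_eq_finset_sum_of_support_subset _ hsupp]
  have step1 : ∑ k ∈ Finset.Icc (-(n : ℤ)) ((n : ℤ) + m),
        ((-1 : ℤ) ^ k.natAbs * (ichoose (2 * (n : ℤ) + m) ((n : ℤ) + 3 * k) : ℤ))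
      = ∑ k ∈ (Finset.Icc (-(n : ℤ)) ((n : ℤ) + m)).filter
          (fun k => 0 ≤ (n : ℤ) + 3 * k ∧ (n : ℤ) + 3 * k ≤ 2 * (n : ℤ) + m),
        ((-1 : ℤ) ^ k.natAbs * (ichoose (2 * (n : ℤ) + m) ((n : ℤ) + 3 * k) : ℤ)) := by
    symm
    apply Finset.sum_filter_of_ne
    intro k _ hk
    by_contra hc
    apply hk
    rw [hcond k hc]
    simp
  have step2 : T (2 * n + m) n
      = ∑ j ∈ (Finset.range (2 * n + m + 1)).filter (fun j => j % 3 = n % 3),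
          w n j * (((2 * n + m).choose j : ℕ) : ℤ) := by
    unfold T
    symm
    apply Finset.sum_filter_of_ne
    intro j _ hj
    by_contra hc
    apply hj
    have hw : w n j = 0 := by
      unfold w
      rw [if_neg (by omega), if_neg (by omega)]
    rw [hw]
    ring
  rw [step1, step2]
  refine Finset.sum_nbij' (fun k => ((n : ℤ) + 3 * k).toNat) (fun j => ((j : ℤ) - n) / 3)
    ?_ ?_ ?_ ?_ ?_
  · intro k hk
    simp only [Finset.mem_filter, Finset.mem_Icc, Finset.mem_range] at hk ⊢
    omega
  · intro j hj
    simp only [Finset.mem_filter, Finset.mem_Icc, Finset.mem_range] at hj ⊢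
    omega
  · intro k hk
    simp only [Finset.mem_filter, Finset.mem_Icc] at hk
    omega
  · intro j hj
    simp only [Finset.mem_filter, Finset.mem_range] at hj
    omega
  · intro k hk
    simp only [Finset.mem_filter, Finset.mem_Icc] at hk
    obtain ⟨-, h0, hN'⟩ := hk
    have hj : ((((n : ℤ) + 3 * k).toNat : ℕ) : ℤ) = (n : ℤ) + 3 * k := Int.toNat_of_nonneg h0
    have hich : (ichoose (2 * (n : ℤ) + m) ((n : ℤ) + 3 * k) : ℤ)
        = (((2 * n + m).choose ((n : ℤ) + 3 * k).toNat : ℕ) : ℤ) := by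
      unfold ichoose
      rw [if_pos ⟨h0, hN'⟩]
      have h2 : (2 * (n : ℤ) + m).toNat = 2 * n + m := by omega
      rw [h2]
    rw [hich]
    rcases Int.even_or_odd k with ⟨t, ht⟩ | ⟨t, ht⟩
    · have he : Even k.natAbs := Int.natAbs_even.2 ⟨t, ht⟩
      rw [he.neg_one_pow]
      have hw : w n (((n : ℤ) + 3 * k).toNat) = 1 := by
        unfold w
        rw [if_pos (by omega)]
      rw [hw]
    · have he : Odd k.natAbs := Int.natAbs_odd.2 ⟨t, ht⟩
      rw [he.neg_one_pow]
      have hw : w n (((n : ℤ) + 3 * k).toNat) = -1 := by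
        unfold w
        rw [if_neg (by omega), if_pos (by omega)]
      rw [hw]

theorem stmt19 (n m : ℕ) (hn : 0 < n) :
    ∑ᶠ k : ℤ, ((-1 : ℤ) ^ k.natAbs * (ichoose (2 * n + m) (n + 3 * k) : ℤ)) =
      3 ^ (n - 1) *
        (((∑ l ∈ Finset.range (m + 2), ((m + 1).choose (6 * l) : ℤ)) -
            ∑ l ∈ Finset.range (m + 2), ((m + 1).choose (6 * l + 3) : ℤ)) +
          ((∑ l ∈ Finset.range (m + 2), ((m + 1).choose (6 * l + 1) : ℤ)) -
            ∑ l ∈ Finset.range (m + 2), ((m + 1).choose (6 * l + 4) : ℤ))) := by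
  rw [lhs_eq n m, T_main n m hn, T_eq (m + 1) 0 (by omega), T_eq (m + 1) 1 (by omega)]
  norm_num
end
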